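/- arXiv:2006.16702 — 2 statements merged into one kernel-verified Lean document; each statement's English description precedes it below -/
import Mathlib

section
/- With θ ∈ (0, π) and t₀ = ⌊π/(2θ) − 1/2⌋ (the integer making θt₀ + θ/2 closest to π/2 from below), the success amplitude satisfies sin²(θ t₀ + θ/2) ≥ 1 − sin²(θ/2 + θ) ≥ cos²(3θ/2); in particular, as θ → 0 the success probability sin²(θ t₀ + θ/2) tends to 1. Concretely: for all θ ∈ (0, π), |π/2 − (θ t₀ + θ/2)| ≤ θ, hence sin²(θ t₀ + θ/2) ≥ cos² θ. -/
/-! The angle `a = θ t₀ + θ/2` is the largest point of the grid `θ/2 + θℤ` that does not exceed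
`π/2`, so `0 ≤ π/2 - a < θ`; moreover `t₀ ≥ 0` gives `a ≥ θ/2`, hence `π/2 - a ≤ π - θ`.
Writing `sin a = cos (π/2 - a)`, it remains to see that `|cos θ| = max (cos θ) (cos (π - θ))` is at
most `cos d` for every `d ∈ [0, min θ (π - θ)]`, by monotonicity of `cos` on `[0, π]`. -/

open Real

lemma mul_floor_div_mem_Ioc {θ : ℝ} (hθ : 0 < θ) (y : ℝ) :
    θ * ⌊y / θ⌋ ∈ Set.Ioc (y - θ) y := by
  have hle : (⌊y / θ⌋ : ℝ) ≤ y / θ := Int.floor_le _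
  have hlt : y / θ < ⌊y / θ⌋ + 1 := Int.lt_floor_add_one _
  rw [le_div_iff₀ hθ] at hle
  rw [div_lt_iff₀ hθ] at hlt
  constructor <;> linarith

lemma cos_sq_le_cos_sq_of_le_of_le_pi_sub {θ d : ℝ} (hd : 0 ≤ d) (hdθ : d ≤ θ)
    (hdπ : d ≤ π - θ) : cos θ ^ 2 ≤ cos d ^ 2 := by
  have hθπ : θ ≤ π := by linarith
  have hcos : cos θ ≤ cos d := cos_le_cos_of_nonneg_of_le_pi hd hθπ hdθ
  have hcos_neg : -cos θ ≤ cos d := by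
    rw [← cos_pi_sub]
    exact cos_le_cos_of_nonneg_of_le_pi hd (by linarith) hdπ
  exact sq_le_sq' (by linarith) hcos

/-- For `θ ∈ (0, π)` and `t₀ = ⌊π/(2θ) − 1/2⌋`, the Grover angle
`θ t₀ + θ/2` satisfies `|π/2 − (θ t₀ + θ/2)| ≤ θ`, hence the success probability satisfies
`sin²(θ t₀ + θ/2) ≥ cos² θ` (which tends to `1` as `θ → 0`). -/
theorem stmt15 (θ : ℝ) (hθ : 0 < θ) (hθπ : θ < Real.pi)
    (t₀ : ℤ) (ht₀ : t₀ = ⌊Real.pi / (2 * θ) - 1 / 2⌋) :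
    |Real.pi / 2 - (θ * t₀ + θ / 2)| ≤ θ ∧
    Real.cos θ ^ 2 ≤ Real.sin (θ * t₀ + θ / 2) ^ 2 := by
  have ht₀' : t₀ = ⌊(π / 2 - θ / 2) / θ⌋ := by
    rw [ht₀]; congr 1; field_simp
  obtain ⟨hlo, hhi⟩ := mul_floor_div_mem_Ioc hθ (π / 2 - θ / 2)
  rw [← ht₀'] at hlo hhi
  have ht₀_nonneg : (0 : ℝ) ≤ t₀ := by
    rw [ht₀']; exact_mod_cast Int.floor_nonneg.mpr (div_nonneg (by linarith) hθ.le)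
  have hθt₀ : 0 ≤ θ * t₀ := mul_nonneg hθ.le ht₀_nonneg
  refine ⟨abs_le.mpr ⟨by linarith, by linarith⟩, ?_⟩
  rw [← cos_pi_div_two_sub]
  exact cos_sq_le_cos_sq_of_le_of_le_pi_sub (by linarith) (by linarith) (by linarith)
end

section
/- Let U be a unitary on a Hilbert space with eigenvector |u⟩, U|u⟩ = e^{2πi·(0.a_m a_{m−1} … a_1)}|u⟩ for binary digits a_j. Applying the controlled operators C_j-U^{2^j} for j = 0,…,m−1 to the state (⊗_{j=1}^m (|0⟩+|1⟩)/√2) ⊗ |u⟩ yields (⊗_{l=1}^m (|0⟩ + e^{2πi·2^{m−l}·φ}|1⟩)/√2) ⊗ |u⟩ where φ = 0.a_m…a_1 = a/2^m, which equals QFT(|a_m…a_1⟩) ⊗ |u⟩; hence applying QFT⁻¹ to the first register yields the basis state |a_m…a_1⟩ ⊗ |u⟩ exactly. -/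
/-!
Let `ω = e^{2πi a/2^m}`. Every controlled power of `U` maps a product state `F ⊗ u` to a
product state, multiplying the amplitude of the control string `g` by `ω^{g_j 2^{m-1-j}}`;
after all `m` of them the amplitude of `g` has picked up `ω^{enc g}`, which is the Fourier
vector `QFT|b⟩`. Applying `QFT⁻¹` to it gives `|b⟩` by orthogonality of the characters
`k ↦ ζ^{xk}` of `ℤ/2^m` for a primitive `2^m`-th root of unity `ζ`.
-/

open scoped TensorProduct

/-- Binary encoding of an `m`-bit register basis state, most significant digit first. -/
def enc (m : ℕ) (g : Fin m → Fin 2) : ℕ :=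
  ∑ j : Fin m, (g j : ℕ) * 2 ^ (m - 1 - (j : ℕ))

/-- Projection of the `m`-qubit register onto control qubit `j` having value `c`. -/
noncomputable def ctrlProj (m : ℕ) (j : Fin m) (c : Fin 2) :
    ((Fin m → Fin 2) → ℂ) →ₗ[ℂ] ((Fin m → Fin 2) → ℂ) where
  toFun ψ g := if g j = c then ψ g else 0
  map_add' ψ φ := by funext g; by_cases h : g j = c <;> simp [h]
  map_smul' r ψ := by funext g; by_cases h : g j = c <;> simp [h]

/-- The inverse quantum Fourier transform on the `m`-qubit register,
`QFT⁻¹|a⟩ = (1/√N) Σ_k e^{−2πiak/N}|k⟩`, in the bit-string basis. -/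
noncomputable def invQFT (m : ℕ) :
    ((Fin m → Fin 2) → ℂ) →ₗ[ℂ] ((Fin m → Fin 2) → ℂ) where
  toFun ψ g := ((Real.sqrt (2 ^ m) : ℂ))⁻¹ * ∑ g' : Fin m → Fin 2,
      Complex.exp (-(2 * Real.pi * Complex.I * (enc m g) * (enc m g') / (2 ^ m : ℂ))) * ψ g'
  map_add' ψ φ := by
    funext g
    simp [Pi.add_apply, mul_add, Finset.sum_add_distrib]
  map_smul' r ψ := by
    funext g
    simp only [Pi.smul_apply, smul_eq_mul, RingHom.id_apply]
    rw [Finset.mul_sum, Finset.mul_sum, Finset.mul_sum]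
    congr 1
    ext g'
    ring

/-- The controlled `U^{2^{m−1−j}}` operator: it applies `U^{2^{m−1−j}}` to the target
register conditioned on control qubit `j` being `|1⟩` (qubit `j` counted most significant
first, i.e. it is the `(m−1−j)`-th qubit from the bottom, controlling `U^{2^{m−1−j}}`). -/
noncomputable def ctrlU (m : ℕ) {H : Type*} [AddCommGroup H] [Module ℂ H]
    (U : H →ₗ[ℂ] H) (j : Fin m) :
    Module.End ℂ (TensorProduct ℂ ((Fin m → Fin 2) → ℂ) H) :=
  TensorProduct.map (ctrlProj m j 1) (U ^ (2 ^ (m - 1 - (j : ℕ))))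
    + TensorProduct.map (ctrlProj m j 0) LinearMap.id

open Complex Finset

theorem IsPrimitiveRoot.sum_range_pow_mul_mul_inv_pow_mul {K : Type*} [Field K] {ζ : K} {N : ℕ}
    (hζ : IsPrimitiveRoot ζ N) {x y : ℕ} (hx : x < N) (hy : y < N) :
    ∑ k ∈ range N, ζ ^ (x * k) * (ζ ^ (y * k))⁻¹ = if x = y then (N : K) else 0 := by
  have hterm : ∀ k, ζ ^ (x * k) * (ζ ^ (y * k))⁻¹ = (ζ ^ x / ζ ^ y) ^ k := fun k => by
    rw [div_pow, ← pow_mul, ← pow_mul, div_eq_mul_inv]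
  simp only [hterm]
  split_ifs with hxy
  · have hζ0 : ζ ^ y ≠ 0 := pow_ne_zero _ (hζ.ne_zero (by omega))
    simp [hxy, hζ0]
  · have hne : ζ ^ x / ζ ^ y ≠ 1 := fun h =>
      hxy (hζ.pow_inj hx hy (div_eq_one_iff_eq (pow_ne_zero _ (hζ.ne_zero (by omega))) |>.mp h))
    rw [geom_sum_eq hne, div_pow, ← pow_mul, ← pow_mul, mul_comm x, mul_comm y, pow_mul,
      pow_mul, hζ.pow_eq_one]
    simp

theorem pow_apply_of_apply_eq_smul {R M : Type*} [CommSemiring R] [AddCommMonoid M] [Module R M]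
    {f : Module.End R M} {μ : R} {v : M} (hv : f v = μ • v) (n : ℕ) :
    (f ^ n) v = μ ^ n • v := by
  induction n <;> simp [*, pow_succ f, smul_smul, pow_succ' μ]

section Encoding

variable (m : ℕ)

-- Reversing the digits turns Mathlib's little-endian `finFunctionFinEquiv` into `enc`.
def encEquiv : (Fin m → Fin 2) ≃ Fin (2 ^ m) :=
  (Equiv.arrowCongr Fin.revPerm (Equiv.refl (Fin 2))).trans finFunctionFinEquiv

theorem encEquiv_val (g : Fin m → Fin 2) : (encEquiv m g : ℕ) = enc m g := by
  simp only [encEquiv, Equiv.trans_apply, Equiv.arrowCongr_apply, finFunctionFinEquiv_apply, enc]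
  rw [← Equiv.sum_comp Fin.revPerm (fun j : Fin m => (g j : ℕ) * 2 ^ (m - 1 - (j : ℕ)))]
  refine sum_congr rfl fun i _ => ?_
  have he : m - 1 - (m - ((i : ℕ) + 1)) = i := by omega
  simp [Fin.val_rev, he, Fin.revPerm]

theorem enc_lt (g : Fin m → Fin 2) : enc m g < 2 ^ m :=
  encEquiv_val m g ▸ (encEquiv m g).isLt

theorem enc_injective : Function.Injective (enc m) := fun g g' h =>
  (encEquiv m).injective (Fin.val_injective (by rw [encEquiv_val, encEquiv_val, h]))

theorem sum_comp_enc {M : Type*} [AddCommMonoid M] (f : ℕ → M) :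
    ∑ g : Fin m → Fin 2, f (enc m g) = ∑ k ∈ range (2 ^ m), f k := by
  rw [← Fin.sum_univ_eq_sum_range, ← (encEquiv m).sum_comp]
  simp only [encEquiv_val]

end Encoding

section ControlledPowers

variable {m : ℕ} {H : Type*} [AddCommGroup H] [Module ℂ H] {U : H →ₗ[ℂ] H} {u : H} {ω : ℂ}

theorem ctrlU_tmul (hu : U u = ω • u) (j : Fin m) (F : (Fin m → Fin 2) → ℂ) :
    ctrlU m U j (F ⊗ₜ u) = (fun g => ω ^ ((g j : ℕ) * 2 ^ (m - 1 - (j : ℕ))) * F g) ⊗ₜ u := by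
  simp only [ctrlU, LinearMap.add_apply, TensorProduct.map_tmul, pow_apply_of_apply_eq_smul hu,
    LinearMap.id_coe, id_eq, TensorProduct.tmul_smul, TensorProduct.smul_tmul',
    ← TensorProduct.add_tmul]
  congr 1
  funext g
  rcases (by omega : g j = 0 ∨ g j = 1) with hg | hg <;> simp [ctrlProj, hg]

theorem list_prod_map_ctrlU_tmul (hu : U u = ω • u) (l : List (Fin m))
    (F : (Fin m → Fin 2) → ℂ) :
    (l.map (ctrlU m U)).prod (F ⊗ₜ u)
      = (fun g => (l.map fun j : Fin m => ω ^ ((g j : ℕ) * 2 ^ (m - 1 - (j : ℕ)))).prod * F g)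
          ⊗ₜ u := by
  induction l generalizing F with
  | nil => simp
  | cons j l ih =>
    simp only [List.map_cons, List.prod_cons, Module.End.mul_apply, ih, ctrlU_tmul hu, mul_assoc]

theorem prod_ofFn_ctrlU_tmul (hu : U u = ω • u) (F : (Fin m → Fin 2) → ℂ) :
    (List.ofFn (ctrlU m U)).prod (F ⊗ₜ u) = (fun g => ω ^ enc m g * F g) ⊗ₜ u := by
  rw [List.ofFn_eq_map, list_prod_map_ctrlU_tmul hu]
  simp only [← List.ofFn_eq_map, List.prod_ofFn, prod_pow_eq_pow_sum, enc]

end ControlledPowers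

theorem invQFT_qft_basis (m : ℕ) (b : Fin m → Fin 2) :
    invQFT m (fun g => (Real.sqrt (2 ^ m) : ℂ)⁻¹
        * exp (2 * Real.pi * I * (enc m b) * (enc m g) / (2 ^ m : ℂ)))
      = Pi.single b 1 := by
  set ζ := exp (2 * Real.pi * I / (2 ^ m : ℂ))
  have hζ : IsPrimitiveRoot ζ (2 ^ m) := by
    simpa using isPrimitiveRoot_exp (2 ^ m) (by positivity)
  have hphase (x y : ℕ) : exp (2 * Real.pi * I * x * y / (2 ^ m : ℂ)) = ζ ^ (x * y) := by
    rw [← exp_nat_mul]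
    push_cast
    ring_nf
  have hsqrt : (Real.sqrt (2 ^ m) : ℂ)⁻¹ * (Real.sqrt (2 ^ m) : ℂ)⁻¹ * (2 ^ m : ℕ) = 1 := by
    rw [← mul_inv, ← ofReal_mul, Real.mul_self_sqrt (by positivity)]
    push_cast
    exact inv_mul_cancel₀ (pow_ne_zero _ two_ne_zero)
  funext g
  simp only [invQFT, LinearMap.coe_mk, AddHom.coe_mk, exp_neg, hphase]
  calc (Real.sqrt (2 ^ m) : ℂ)⁻¹ * ∑ g', (ζ ^ (enc m g * enc m g'))⁻¹
          * ((Real.sqrt (2 ^ m) : ℂ)⁻¹ * ζ ^ (enc m b * enc m g'))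
      = (Real.sqrt (2 ^ m) : ℂ)⁻¹ * (Real.sqrt (2 ^ m) : ℂ)⁻¹
          * ∑ k ∈ range (2 ^ m), ζ ^ (enc m b * k) * (ζ ^ (enc m g * k))⁻¹ := by
        rw [← sum_comp_enc m, mul_assoc, mul_sum, mul_sum, mul_sum]
        exact sum_congr rfl fun _ _ => by ring
    _ = (Pi.single b 1 : (Fin m → Fin 2) → ℂ) g := by
        rw [hζ.sum_range_pow_mul_mul_inv_pow_mul (enc_lt m b) (enc_lt m g), Pi.single_apply]
        by_cases hgb : g = b
        · rw [if_pos (congrArg _ hgb.symm), if_pos hgb, hsqrt]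
        · rw [if_neg ((enc_injective m).ne (Ne.symm hgb)), if_neg hgb, mul_zero]

theorem stmt19_general (m : ℕ) (a : ℕ)
    {H : Type*} [AddCommGroup H] [Module ℂ H]
    (U : H →ₗ[ℂ] H) (u : H)
    (heig : U u = Complex.exp (2 * Real.pi * Complex.I * a / (2 ^ m : ℂ)) • u)
    (b : Fin m → Fin 2) (hb : enc m b = a)
    (ψ₀ : TensorProduct ℂ ((Fin m → Fin 2) → ℂ) H)
    (hψ₀ : ψ₀ = (fun _ : Fin m → Fin 2 => ((Real.sqrt (2 ^ m) : ℂ))⁻¹) ⊗ₜ[ℂ] u) :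
    (List.ofFn fun j : Fin m => ctrlU m U j).prod ψ₀
        = (fun g : Fin m → Fin 2 => ((Real.sqrt (2 ^ m) : ℂ))⁻¹
            * Complex.exp (2 * Real.pi * Complex.I * a * (enc m g) / (2 ^ m : ℂ)))
          ⊗ₜ[ℂ] u ∧
    TensorProduct.map (invQFT m) LinearMap.id
        ((List.ofFn fun j : Fin m => ctrlU m U j).prod ψ₀)
      = (Pi.single b 1 : (Fin m → Fin 2) → ℂ) ⊗ₜ[ℂ] u := by
  subst hψ₀ hb
  have hphases : (List.ofFn fun j : Fin m => ctrlU m U j).prod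
      ((fun _ : Fin m → Fin 2 => ((Real.sqrt (2 ^ m) : ℂ))⁻¹) ⊗ₜ[ℂ] u)
        = (fun g : Fin m → Fin 2 => ((Real.sqrt (2 ^ m) : ℂ))⁻¹
            * exp (2 * Real.pi * I * (enc m b) * (enc m g) / (2 ^ m : ℂ))) ⊗ₜ[ℂ] u := by
    rw [prod_ofFn_ctrlU_tmul heig]
    congr 1
    funext g
    rw [mul_comm, ← exp_nat_mul]
    ring_nf
  refine ⟨hphases, ?_⟩
  rw [hphases, TensorProduct.map_tmul, invQFT_qft_basis, LinearMap.id_apply]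

/-- Exact phase estimation. Let `U|u⟩ = e^{2πi a/2^m}|u⟩` with
`a = 0.a_m…a_1 · 2^m` an `m`-binary-digit phase. Applying the controlled powers of `U` to
`(⊗(|0⟩+|1⟩)/√2) ⊗ |u⟩` yields `QFT(|a_m…a_1⟩) ⊗ |u⟩`, whose first-register amplitudes are
`(1/√N) e^{2πi a k/N}`; applying `QFT⁻¹` to the first register then yields exactly the basis
state `|a_m…a_1⟩ ⊗ |u⟩`. -/
theorem stmt19 (m : ℕ) (a : ℕ) (ha : a < 2 ^ m)
    {H : Type*} [AddCommGroup H] [Module ℂ H]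
    (U : H →ₗ[ℂ] H) (u : H) (hu : u ≠ 0)
    (heig : U u = Complex.exp (2 * Real.pi * Complex.I * a / (2 ^ m : ℂ)) • u)
    (b : Fin m → Fin 2) (hb : enc m b = a)
    (ψ₀ : TensorProduct ℂ ((Fin m → Fin 2) → ℂ) H)
    (hψ₀ : ψ₀ = (fun _ : Fin m → Fin 2 => ((Real.sqrt (2 ^ m) : ℂ))⁻¹) ⊗ₜ[ℂ] u) :
    (List.ofFn fun j : Fin m => ctrlU m U j).prod ψ₀
        = (fun g : Fin m → Fin 2 => ((Real.sqrt (2 ^ m) : ℂ))⁻¹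
            * Complex.exp (2 * Real.pi * Complex.I * a * (enc m g) / (2 ^ m : ℂ)))
          ⊗ₜ[ℂ] u ∧
    TensorProduct.map (invQFT m) LinearMap.id
        ((List.ofFn fun j : Fin m => ctrlU m U j).prod ψ₀)
      = (Pi.single b 1 : (Fin m → Fin 2) → ℂ) ⊗ₜ[ℂ] u :=
  stmt19_general m a U u heig b hb ψ₀ hψ₀
end
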